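/- There is a constant C' such that the following holds. Let (W,B) be a (δ,t)-bipartite pair of Ψ-circles with #W = m ≥ 2 and #B = n ≥ 2, and let μ₀ ≥ 1. Then W can be written as a disjoint union W = W_g ⊔ W_b such that: (i) there is no (δ,t)-rectangle of type (≳μ₀,≳1) relative to (W_g, B); and (ii) W_b is a union of at most C' (m/μ₀)(log m)(log n) clusters. -/

import Mathlib

/-! STATEMENT 12 -/

open MeasureTheory Metric Set
open scoped ENNReal

noncomputable section

abbrev E2 := EuclideanSpace ℝ (Fin 2)

/-- Evaluation of a polynomial `Ψ : ℝ²×ℝ² → ℝ` (encoded as a polynomial in 4 variables). -/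
noncomputable def pev (Ψ : MvPolynomial (Fin 4) ℝ) (x y : E2) : ℝ :=
  MvPolynomial.eval ![x 0, x 1, y 0, y 1] Ψ

/-- The gradient of `Ψ` in the second (the `y`) variable. -/
noncomputable def gradY (Ψ : MvPolynomial (Fin 4) ℝ) (x y : E2) : E2 :=
  gradient (fun y' => pev Ψ x y') y

/-- The unit vector in the direction of `∇_y Ψ`. -/
noncomputable def unitGradY (Ψ : MvPolynomial (Fin 4) ℝ) (x y : E2) : E2 :=
  ‖gradY Ψ x y‖⁻¹ • gradY Ψ x y

/-- First row of the cinematic curvature matrix: `∇_x [e · ∇_y Ψ(x,y)]` at `(a,b)`. -/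
noncomputable def cinRow1 (Ψ : MvPolynomial (Fin 4) ℝ) (e a b : E2) : E2 :=
  gradient (fun x => (inner ℝ e (gradY Ψ x b) : ℝ)) a

/-- Second row of the cinematic curvature matrix:
`∇_x [e · ∇_y (e · ∇_y Ψ(x,y) / |∇_y Ψ(x,y)|)]` at `(a,b)`. -/
noncomputable def cinRow2 (Ψ : MvPolynomial (Fin 4) ℝ) (e a b : E2) : E2 :=
  gradient (fun x =>
    (inner ℝ e (gradient (fun y => (inner ℝ e (unitGradY Ψ x y) : ℝ)) b) : ℝ)) a

/-- Sogge's cinematic curvature conditions at the point `(a,b)`. -/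
def CinematicAt (Ψ : MvPolynomial (Fin 4) ℝ) (a b : E2) : Prop :=
  gradY Ψ a b ≠ 0 ∧
  ∀ e : E2, ‖e‖ = 1 → (inner ℝ e (gradY Ψ a b) : ℝ) = 0 →
    Matrix.det !![cinRow1 Ψ e a b 0, cinRow1 Ψ e a b 1;
                  cinRow2 Ψ e a b 0, cinRow2 Ψ e a b 1] ≠ 0

/-- A `Ψ`-circle: a pair `(x₀, r₀)` with `x₀ ∈ B(0,α)` and `r₀ ∈ (1-τ,1)`. -/
structure PsiCircle (Ψ : MvPolynomial (Fin 4) ℝ) (α τ : ℝ) where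
  x₀ : E2
  r₀ : ℝ
  hx : x₀ ∈ ball (0:E2) α
  hr : r₀ ∈ Ioo (1 - τ) 1

/-- The point set `Γ(x₀,r₀) = {y ∈ B(0,α) : Ψ(x₀,y) = r₀}` of a `Ψ`-circle. -/
def circleSet {Ψ : MvPolynomial (Fin 4) ℝ} {α τ : ℝ} (Γ : PsiCircle Ψ α τ) : Set E2 :=
  {y ∈ ball (0:E2) α | pev Ψ Γ.x₀ y = Γ.r₀}

/-- The distance `d(Γ,Γ') = |x₀ - x̃₀| + |r₀ - r̃₀|` between two `Ψ`-circles. -/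
noncomputable def dd {Ψ : MvPolynomial (Fin 4) ℝ} {α τ : ℝ} (Γ Γ' : PsiCircle Ψ α τ) : ℝ :=
  dist Γ.x₀ Γ'.x₀ + |Γ.r₀ - Γ'.r₀|

/-- The "tangency distance" `Δ(Γ,Γ')` between two `Ψ`-circles. -/
noncomputable def DeltaDist {Ψ : MvPolynomial (Fin 4) ℝ} {α τ : ℝ}
    (Γ Γ' : PsiCircle Ψ α τ) : ℝ :=
  sInf {v : ℝ | ∃ y ∈ ball (0:E2) α, ∃ y' ∈ ball (0:E2) α,
    pev Ψ Γ.x₀ y = Γ.r₀ ∧ pev Ψ Γ'.x₀ y' = Γ'.r₀ ∧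
    v = ‖y - y'‖ + ‖unitGradY Ψ Γ.x₀ y - unitGradY Ψ Γ'.x₀ y'‖}

/-- `(W,B)` is a `(δ,t)`-bipartite pair of `Ψ`-circles. -/
def Bipartite {Ψ : MvPolynomial (Fin 4) ℝ} {α τ : ℝ} (δ t : ℝ)
    (W B : Finset (PsiCircle Ψ α τ)) : Prop :=
  (∀ Γ, (Γ ∈ W ∨ Γ ∈ B) → ∀ Γ', (Γ' ∈ W ∨ Γ' ∈ B) → Γ ≠ Γ' → δ ≤ |Γ.r₀ - Γ'.r₀|) ∧
  (∀ Γ ∈ W, ∀ Γ' ∈ B, dd Γ Γ' ∈ Ioo t (2*t)) ∧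
  (∀ Γ ∈ W, ∀ Γ' ∈ W, Γ ≠ Γ' → dd Γ Γ' ∈ Ioo 0 t) ∧
  (∀ Γ ∈ B, ∀ Γ' ∈ B, Γ ≠ Γ' → dd Γ Γ' ∈ Ioo 0 t)

/-- A `(δ,t)`-rectangle: the `δ`-neighborhood of a (connected) arc of arclength
`√(δ/t)` of a `Ψ`-circle. -/
def IsRect (Ψ : MvPolynomial (Fin 4) ℝ) (α τ δ t : ℝ) (R : Set E2) : Prop :=
  ∃ (Γ : PsiCircle Ψ α τ) (A : Set E2), A ⊆ circleSet Γ ∧ IsConnected A ∧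
    μH[1] A = ENNReal.ofReal (Real.sqrt (δ / t)) ∧ R = cthickening δ A

/-- A `Ψ`-circle `Γ` is incident to `R` if `R` is contained in the `C₁δ`-neighborhood of
`Γ`. -/
def Incident (C₁ δ : ℝ) {Ψ : MvPolynomial (Fin 4) ℝ} {α τ : ℝ}
    (R : Set E2) (Γ : PsiCircle Ψ α τ) : Prop :=
  R ⊆ cthickening (C₁ * δ) (circleSet Γ)

/-- `R` is of type `(≳μ,≳ν)` relative to `(W,B)`: it is incident to at least `Cc·μ`
circles of `W` and at least `Cc·ν` circles of `B`. -/
def RectType (Cc C₁ δ : ℝ) {Ψ : MvPolynomial (Fin 4) ℝ} {α τ : ℝ}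
    (W B : Finset (PsiCircle Ψ α τ)) (μ ν : ℝ) (R : Set E2) : Prop :=
  Cc * μ ≤ ({Γ ∈ (W : Set (PsiCircle Ψ α τ)) | Incident C₁ δ R Γ}).ncard ∧
  Cc * ν ≤ ({Γ ∈ (B : Set (PsiCircle Ψ α τ)) | Incident C₁ δ R Γ}).ncard

/-- Two `(δ,t)`-rectangles are comparable if each is contained in the
`A₀δ`-neighborhood of the other. -/
def Comparable (A₀ δ : ℝ) (R₁ R₂ : Set E2) : Prop :=
  R₁ ⊆ cthickening (A₀ * δ) R₂ ∧ R₂ ⊆ cthickening (A₀ * δ) R₁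

/-- A cluster: a collection of `Ψ`-circles each of which is incident to some
`(δ,t)`-rectangle comparable to a fixed `(δ,t)`-rectangle `R₀`. -/
def IsCluster (Ψ : MvPolynomial (Fin 4) ℝ) (α τ C₁ A₀ δ t : ℝ)
    (C : Finset (PsiCircle Ψ α τ)) : Prop :=
  ∃ R₀ : Set E2, IsRect Ψ α τ δ t R₀ ∧
    ∀ Γ ∈ C, ∃ R : Set E2, IsRect Ψ α τ δ t R ∧ Comparable A₀ δ R R₀ ∧ Incident C₁ δ R Γ

/-!
Greedy peeling. While some `(δ,t)`-rectangle `R` is of type `(≳μ₀,≳1)` relative to the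
remaining circles, the remaining circles incident to `R` form a cluster (with `R₀ = R`, every
rectangle being comparable to itself) of at least `Cc·μ₀` circles; move it to `W_b`. This
stops after at most `m / (Cc·μ₀)` steps, and since `m, n ≥ 2` the factor `log m · log n` is at
least `(log 2)²`, which is absorbed into `C'`.
-/

theorem Finset.exists_peel_of_forall_exists_large {ι : Type*} [DecidableEq ι]
    (P Q : Finset ι → Prop) {c : ℝ} (hc : 0 < c)
    (hP : ∀ V, P V → ∃ S ⊆ V, c ≤ S.card ∧ Q S) (W : Finset ι) :
    ∃ G ⊆ W, ¬ P G ∧ ∃ (N : ℕ) (Cl : Fin N → Finset ι),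
      N * c ≤ W.card ∧ (∀ i, Q (Cl i)) ∧ ∀ x ∈ W, x ∉ G → ∃ i, x ∈ Cl i := by
  induction W using Finset.strongInduction with
  | H W ih =>
    by_cases hW : P W
    · obtain ⟨S, hSW, hcS, hQS⟩ := hP W hW
      have hS : S.Nonempty := Finset.card_pos.mp (by exact_mod_cast hc.trans_le hcS)
      obtain ⟨G, hG, hPG, N, Cl, hN, hQ, hcover⟩ :=
        ih (W \ S) (Finset.sdiff_ssubset hSW hS)
      refine ⟨G, hG.trans Finset.sdiff_subset, hPG, N + 1, Fin.cons S Cl, ?_,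
        Fin.cases hQS hQ, fun x hxW hxG => ?_⟩
      · have hcard : ((W \ S).card : ℝ) + S.card = W.card := by
          exact_mod_cast Finset.card_sdiff_add_card_eq_card hSW
        push_cast
        linarith
      · by_cases hxS : x ∈ S
        · exact ⟨0, hxS⟩
        · obtain ⟨i, hi⟩ := hcover x (Finset.mem_sdiff.mpr ⟨hxW, hxS⟩) hxG
          exact ⟨i.succ, hi⟩
    · exact ⟨W, subset_rfl, hW, 0, Fin.elim0, by simp, fun i => i.elim0,
        fun _ hx hxW => absurd hx hxW⟩

theorem le_div_log_two_sq_mul_log_mul_log {x a b : ℝ} (hx : 0 ≤ x) (ha : 2 ≤ a)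
    (hb : 2 ≤ b) : x ≤ x / Real.log 2 ^ 2 * Real.log a * Real.log b := by
  have hl2 : 0 < Real.log 2 := Real.log_pos one_lt_two
  have hla : Real.log 2 ≤ Real.log a := Real.log_le_log two_pos ha
  have hlb : Real.log 2 ≤ Real.log b := Real.log_le_log two_pos hb
  calc x = x / Real.log 2 ^ 2 * Real.log 2 * Real.log 2 := by field_simp
    _ ≤ x / Real.log 2 ^ 2 * Real.log a * Real.log b := by
      gcongr
      exact mul_nonneg (by positivity) (hl2.le.trans hla)

section Clusters

variable {Ψ : MvPolynomial (Fin 4) ℝ} {α τ : ℝ}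

theorem comparable_refl (A₀ δ : ℝ) (R : Set E2) : Comparable A₀ δ R R :=
  ⟨self_subset_cthickening R, self_subset_cthickening R⟩

theorem ncard_incident_eq_card_filter (C₁ δ : ℝ) (R : Set E2)
    (V : Finset (PsiCircle Ψ α τ)) [DecidablePred (Incident C₁ δ R : PsiCircle Ψ α τ → Prop)] :
    {Γ ∈ (V : Set (PsiCircle Ψ α τ)) | Incident C₁ δ R Γ}.ncard =
      (V.filter (Incident C₁ δ R)).card := by
  rw [← Set.ncard_coe_finset, Finset.coe_filter]
  rfl

theorem isCluster_filter_incident {δ t : ℝ} (C₁ A₀ : ℝ) {R : Set E2}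
    (hR : IsRect Ψ α τ δ t R) (V : Finset (PsiCircle Ψ α τ))
    [DecidablePred (Incident C₁ δ R : PsiCircle Ψ α τ → Prop)] :
    IsCluster Ψ α τ C₁ A₀ δ t (V.filter (Incident C₁ δ R)) :=
  ⟨R, hR, fun _ hΓ => ⟨R, hR, comparable_refl A₀ δ R, (Finset.mem_filter.mp hΓ).2⟩⟩

theorem exists_large_cluster_of_rectType {Cc C₁ A₀ δ t μ ν : ℝ}
    {V B : Finset (PsiCircle Ψ α τ)}
    (h : ∃ R : Set E2, IsRect Ψ α τ δ t R ∧ RectType Cc C₁ δ V B μ ν R) :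
    ∃ S ⊆ V, Cc * μ ≤ S.card ∧ IsCluster Ψ α τ C₁ A₀ δ t S := by
  classical
  obtain ⟨R, hR, hμ, -⟩ := h
  rw [ncard_incident_eq_card_filter] at hμ
  exact ⟨_, Finset.filter_subset _ V, hμ, isCluster_filter_incident C₁ A₀ hR V⟩

end Clusters

theorem good_bad_decomposition_general
    (C₁ Cc A₀ : ℝ) (hCc : 0 < Cc)
    (Ψ : MvPolynomial (Fin 4) ℝ) :
    ∃ α > (0:ℝ), ∃ τ > (0:ℝ), ∃ C' > (0:ℝ),
      ∀ δ t : ℝ, 0 < δ → δ < t →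
        ∀ W B : Finset (PsiCircle Ψ α τ), Bipartite δ t W B →
          2 ≤ W.card → 2 ≤ B.card →
          ∀ μ₀ : ℝ, 1 ≤ μ₀ →
            ∃ Wg Wb : Finset (PsiCircle Ψ α τ),
              Wg ⊆ W ∧ Wb ⊆ W ∧ Disjoint Wg Wb ∧ (∀ Γ ∈ W, Γ ∈ Wg ∨ Γ ∈ Wb) ∧
              -- (i) no (δ,t)-rectangle of type (≳μ₀,≳1) relative to (Wg, B)
              (¬ ∃ R : Set E2, IsRect Ψ α τ δ t R ∧ RectType Cc C₁ δ Wg B μ₀ 1 R) ∧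
              -- (ii) Wb is a union of at most C'(m/μ₀)(log m)(log n) clusters
              ∃ (N : ℕ) (Cl : Fin N → Finset (PsiCircle Ψ α τ)),
                (N : ℝ) ≤ C' * ((W.card : ℝ) / μ₀) * Real.log W.card * Real.log B.card ∧
                (∀ i, IsCluster Ψ α τ C₁ A₀ δ t (Cl i)) ∧
                (∀ Γ ∈ Wb, ∃ i, Γ ∈ Cl i) := by
  classical
  refine ⟨1, one_pos, 1 / 2, one_half_pos, (Cc * Real.log 2 ^ 2)⁻¹, by positivity, ?_⟩
  intro δ t _ _ W B _ hm hn μ₀ hμ₀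
  have hCcμ₀ : 0 < Cc * μ₀ := mul_pos hCc (one_pos.trans_le hμ₀)
  obtain ⟨G, hGW, hG, N, Cl, hN, hCl, hcover⟩ :=
    Finset.exists_peel_of_forall_exists_large _ _ hCcμ₀
      (fun V => exists_large_cluster_of_rectType (A₀ := A₀) (μ := μ₀) (ν := 1)) W
  refine ⟨G, W \ G, hGW, Finset.sdiff_subset, Finset.disjoint_sdiff,
    fun Γ hΓ => (em (Γ ∈ G)).imp id fun h => Finset.mem_sdiff.mpr ⟨hΓ, h⟩, hG, N, Cl, ?_, hCl,
    fun Γ hΓ => hcover Γ (Finset.mem_sdiff.mp hΓ).1 (Finset.mem_sdiff.mp hΓ).2⟩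
  have hm' : (2 : ℝ) ≤ W.card := by exact_mod_cast hm
  have hn' : (2 : ℝ) ≤ B.card := by exact_mod_cast hn
  calc (N : ℝ) ≤ W.card / (Cc * μ₀) := (le_div_iff₀ hCcμ₀).mpr hN
    _ ≤ W.card / (Cc * μ₀) / Real.log 2 ^ 2 * Real.log W.card * Real.log B.card :=
      le_div_log_two_sq_mul_log_mul_log (by positivity) hm' hn'
    _ = _ := by field_simp

/-- decomposition into a good part and a bounded union of clusters. -/
theorem good_bad_decomposition
    (C₁ Cc A₀ : ℝ) (hC₁ : 0 < C₁) (hCc : 0 < Cc) (hA₀ : 0 < A₀)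
    (Ψ : MvPolynomial (Fin 4) ℝ) (hcin : CinematicAt Ψ 0 0) :
    ∃ α > (0:ℝ), ∃ τ > (0:ℝ), ∃ C' > (0:ℝ),
      ∀ δ t : ℝ, 0 < δ → δ < t →
        ∀ W B : Finset (PsiCircle Ψ α τ), Bipartite δ t W B →
          2 ≤ W.card → 2 ≤ B.card →
          ∀ μ₀ : ℝ, 1 ≤ μ₀ →
            ∃ Wg Wb : Finset (PsiCircle Ψ α τ),
              Wg ⊆ W ∧ Wb ⊆ W ∧ Disjoint Wg Wb ∧ (∀ Γ ∈ W, Γ ∈ Wg ∨ Γ ∈ Wb) ∧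
              -- (i) no (δ,t)-rectangle of type (≳μ₀,≳1) relative to (Wg, B)
              (¬ ∃ R : Set E2, IsRect Ψ α τ δ t R ∧ RectType Cc C₁ δ Wg B μ₀ 1 R) ∧
              -- (ii) Wb is a union of at most C'(m/μ₀)(log m)(log n) clusters
              ∃ (N : ℕ) (Cl : Fin N → Finset (PsiCircle Ψ α τ)),
                (N : ℝ) ≤ C' * ((W.card : ℝ) / μ₀) * Real.log W.card * Real.log B.card ∧
                (∀ i, IsCluster Ψ α τ C₁ A₀ δ t (Cl i)) ∧
                (∀ Γ ∈ Wb, ∃ i, Γ ∈ Cl i) :=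
  good_bad_decomposition_general C₁ Cc A₀ hCc Ψ
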